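/- For all real parameters α > 0 and β > 0 and every symmetric 2×2 real matrix T, the inverted constitutive relation holds: Ψ(‖F(T)‖) · F(T) = T, where F(T) := (1 + (β‖T‖)^α)^{-1/α} · T and Ψ(s) := (1 − (βs)^α)^{-1/α} (note ‖F(T)‖ < 1/β, so Ψ(‖F(T)‖) is well defined). -/

import Mathlib

/-- The Frobenius inner product `A : B = ∑ᵢⱼ Aᵢⱼ Bᵢⱼ` on 2×2 real matrices. -/
noncomputable def frobInner (A B : Matrix (Fin 2) (Fin 2) ℝ) : ℝ :=
  ∑ i, ∑ j, A i j * B i j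

/-- The Frobenius norm `‖A‖ = √(A : A)`. -/
noncomputable def frobNorm (A : Matrix (Fin 2) (Fin 2) ℝ) : ℝ :=
  Real.sqrt (frobInner A A)

/-- The strain-limiting response function `F(T) = (1 + (β‖T‖)^α)^{-1/α} • T`. -/
noncomputable def slResponse (α β : ℝ) (T : Matrix (Fin 2) (Fin 2) ℝ) :
    Matrix (Fin 2) (Fin 2) ℝ :=
  ((1 + (β * frobNorm T) ^ α) ^ (-(1 / α))) • T

/-- The hyperelastic inversion factor `Ψ(s) = (1 − (βs)^α)^{-1/α}`. -/
noncomputable def Psi (α β s : ℝ) : ℝ :=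
  (1 - (β * s) ^ α) ^ (-(1 / α))

/-! `F(T) = c • T` with `c = (1 + x^α)^{-1/α}`, `x = β‖T‖`, so `‖F(T)‖ = c‖T‖` and
`1 − (β‖F(T)‖)^α = 1 − c^α x^α = 1 − x^α / (1 + x^α) = c^α`; hence `Ψ(‖F(T)‖) = c⁻¹`. -/

lemma frobNorm_nonneg (A : Matrix (Fin 2) (Fin 2) ℝ) : 0 ≤ frobNorm A :=
  Real.sqrt_nonneg _

lemma frobNorm_smul {c : ℝ} (hc : 0 ≤ c) (A : Matrix (Fin 2) (Fin 2) ℝ) :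
    frobNorm (c • A) = c * frobNorm A := by
  have hsum : frobInner (c • A) (c • A) = c ^ 2 * frobInner A A := by
    simp only [frobInner, Fin.sum_univ_two, Matrix.smul_apply, smul_eq_mul]
    ring
  rw [frobNorm, hsum, Real.sqrt_mul (sq_nonneg c), Real.sqrt_sq hc, frobNorm]

noncomputable def slFactor (α x : ℝ) : ℝ :=
  (1 + x ^ α) ^ (-(1 / α))

lemma slResponse_eq_smul (α β : ℝ) (T : Matrix (Fin 2) (Fin 2) ℝ) :
    slResponse α β T = slFactor α (β * frobNorm T) • T :=
  rfl

section slFactor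

variable {α x : ℝ}

lemma one_add_rpow_pos (hx : 0 ≤ x) : 0 < 1 + x ^ α := by
  have := Real.rpow_nonneg hx α
  linarith

lemma slFactor_pos (hx : 0 ≤ x) : 0 < slFactor α x :=
  Real.rpow_pos_of_pos (one_add_rpow_pos hx) _

lemma slFactor_rpow (hα : α ≠ 0) (hx : 0 ≤ x) : slFactor α x ^ α = (1 + x ^ α)⁻¹ := by
  rw [slFactor, ← Real.rpow_mul (one_add_rpow_pos hx).le, neg_mul, one_div_mul_cancel hα,
    Real.rpow_neg_one]

lemma one_sub_rpow_slFactor_mul (hα : α ≠ 0) (hx : 0 ≤ x) :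
    1 - (slFactor α x * x) ^ α = (1 + x ^ α)⁻¹ := by
  have hpos := one_add_rpow_pos (α := α) hx
  rw [Real.mul_rpow (slFactor_pos hx).le hx, slFactor_rpow hα hx]
  field_simp
  ring

end slFactor

lemma Psi_mul_slFactor {α β n : ℝ} (hα : α ≠ 0) (hβ : 0 ≤ β) (hn : 0 ≤ n) :
    Psi α β (slFactor α (β * n) * n) = (slFactor α (β * n))⁻¹ := by
  have hx : 0 ≤ β * n := mul_nonneg hβ hn
  rw [Psi, mul_left_comm, one_sub_rpow_slFactor_mul hα hx,
    Real.inv_rpow (one_add_rpow_pos hx).le, slFactor]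

theorem stmt_10_general (α β : ℝ) (hα : 0 < α) (hβ : 0 < β)
    (T : Matrix (Fin 2) (Fin 2) ℝ) :
    Psi α β (frobNorm (slResponse α β T)) • slResponse α β T = T := by
  have hc := slFactor_pos (α := α) (mul_nonneg hβ.le (frobNorm_nonneg T))
  rw [slResponse_eq_smul, frobNorm_smul hc.le,
    Psi_mul_slFactor hα.ne' hβ.le (frobNorm_nonneg T), smul_smul, inv_mul_cancel₀ hc.ne',
    one_smul]

theorem stmt_10 (α β : ℝ) (hα : 0 < α) (hβ : 0 < β)
    (T : Matrix (Fin 2) (Fin 2) ℝ) (hT : T.IsSymm) :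
    Psi α β (frobNorm (slResponse α β T)) • slResponse α β T = T :=
  stmt_10_general α β hα hβ T
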